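/- arXiv:2603.16022 — 2 statements merged into one kernel-verified Lean document; each statement's English description precedes it below -/
import Mathlib

section
/- Let G be a locally compact second countable group and μ a compact invariant random subgroup of G (conjugation-invariant Borel probability measure on Sub(G) concentrated on compact subgroups). Define ν(A) = ∫_{Sub(G)} m_H(A ∩ H) dμ(H), where m_H is the normalized Haar probability measure of the compact group H (viewed as a measure on G). Then ν is a conjugation-invariant Borel probability measure on G, and ⋃ supp(μ) ⊆ supp(ν). -/
open MeasureTheory

/-- The Chabauty space of closed subgroups of `G`. -/
def Chab (G : Type*) [Group G] [TopologicalSpace G] : Type _ :=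
  {H : Subgroup G // IsClosed (H : Set G)}

/-- The Chabauty topology, generated by the sets `Hit(V)` for `V` open
and `Miss(K)` for `K` compact. -/
instance chabTop (G : Type*) [Group G] [TopologicalSpace G] : TopologicalSpace (Chab G) :=
  TopologicalSpace.generateFrom
    ({S | ∃ V : Set G, IsOpen V ∧ S = {H : Chab G | ((H.1 : Set G) ∩ V).Nonempty}} ∪
     {S | ∃ K : Set G, IsCompact K ∧ S = {H : Chab G | (H.1 : Set G) ∩ K = ∅}})

instance chabMeas (G : Type*) [Group G] [TopologicalSpace G] : MeasurableSpace (Chab G) :=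
  borel _

/-- Conjugation action of `G` on its Chabauty space. -/
def conjChab {G : Type*} [Group G] [TopologicalSpace G] [IsTopologicalGroup G]
    (g : G) (H : Chab G) : Chab G :=
  ⟨H.1.map (MulAut.conj g).toMonoidHom, by
    have h1 : (⇑(MulAut.conj g).toMonoidHom) '' ((H.1 : Subgroup G) : Set G)
        = ((Homeomorph.mulLeft g).trans (Homeomorph.mulRight g⁻¹)) ''
            ((H.1 : Subgroup G) : Set G) := by
      apply Set.image_congr'
      intro x
      simp [mul_assoc]
    rw [Subgroup.coe_map, h1, Homeomorph.isClosed_image]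
    exact H.2⟩

/-- The support of a measure: points all of whose open neighbourhoods have positive
measure. -/
def msupport {Y : Type*} [TopologicalSpace Y] [MeasurableSpace Y]
    (μ : Measure Y) : Set Y :=
  {y : Y | ∀ U : Set Y, IsOpen U → y ∈ U → 0 < μ U}

/-!
Write `ν = ∫ m_H|_H dμ(H)`. By invariance of `μ`, conjugation invariance of `ν` reduces to
`m_{gHg⁻¹} = (x ↦ gxg⁻¹)_* m_H` for compact `H`: both are left `gHg⁻¹`-invariant probability
measures carried by `gHg⁻¹`, and such a measure is unique by a Fubini argument.
For the supports: if `H ∈ supp μ` meets an open `U`, then the Chabauty-open set `Hit(U)` has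
positive `μ`-measure, and each compact `H' ∈ Hit(U)` is covered by finitely many `H'`-translates
of `U`, so `m_{H'}(U) > 0`; hence `ν(U) > 0`.
-/

open Set

section HaarProbability

variable {G : Type*} [Group G] [MeasurableSpace G]

structure IsHaarProbabilityOn (S : Subgroup G) (ν : Measure G) : Prop where
  isProbabilityMeasure : IsProbabilityMeasure ν
  measure_compl : ν (S : Set G)ᶜ = 0
  measure_preimage_mul_left :
    ∀ k ∈ S, ∀ A : Set G, MeasurableSet A → ν ((fun x => k * x) ⁻¹' A) = ν A

namespace IsHaarProbabilityOn

variable {S : Subgroup G} {ν ρ : Measure G}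

theorem ae_mem (h : IsHaarProbabilityOn S ν) : ∀ᵐ x ∂ν, x ∈ S :=
  mem_ae_iff.2 h.measure_compl

theorem measure_subgroup (h : IsHaarProbabilityOn S ν) : ν S = 1 := by
  have := h.isProbabilityMeasure
  rw [measure_congr (ae_eq_univ.2 h.measure_compl), measure_univ]

theorem measure_subgroup_inter (h : IsHaarProbabilityOn S ν) (A : Set G) :
    ν ((S : Set G) ∩ A) = ν A := by
  rw [inter_comm, measure_inter_conull h.measure_compl]

/-- Both sides are the product measure `ν ⊗ ρ` of `{(x, y) | x⁻¹ * y ∈ B}`, sliced in the two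
possible orders; left invariance makes every slice over a point of `S` constant. -/
theorem measure_preimage_inv [MeasurableMul₂ G] [MeasurableInv G]
    (hν : IsHaarProbabilityOn S ν) (hρ : IsHaarProbabilityOn S ρ) {B : Set G}
    (hB : MeasurableSet B) : ν ((·⁻¹) ⁻¹' B) = ρ B := by
  have := hν.isProbabilityMeasure
  have := hρ.isProbabilityMeasure
  set E : Set (G × G) := {p | p.1⁻¹ * p.2 ∈ B}
  have hE : MeasurableSet E := (measurable_fst.inv.mul measurable_snd) hB
  have slice_fst : ∀ y ∈ S, ν ((fun x => (x, y)) ⁻¹' E) = ν ((·⁻¹) ⁻¹' B) := fun y hy =>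
    calc ν ((fun x => (x, y)) ⁻¹' E) = ν ((fun x => x⁻¹ * y) ⁻¹' B) := rfl
      _ = ν ((fun x => y * x) ⁻¹' ((fun x => x⁻¹ * y) ⁻¹' B)) :=
        (hν.measure_preimage_mul_left y hy _ (measurable_inv.mul_const y hB)).symm
      _ = ν ((·⁻¹) ⁻¹' B) := by congr 1; ext x; simp [mul_assoc]
  have slice_snd : ∀ x ∈ S, ρ (Prod.mk x ⁻¹' E) = ρ B := fun x hx =>
    hρ.measure_preimage_mul_left x⁻¹ (inv_mem hx) B hB
  calc ν ((·⁻¹) ⁻¹' B) = ν.prod ρ E := by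
        rw [Measure.prod_apply_symm hE, lintegral_congr_ae (hρ.ae_mem.mono slice_fst),
          lintegral_const, measure_univ, mul_one]
    _ = ρ B := by
        rw [Measure.prod_apply hE, lintegral_congr_ae (hν.ae_mem.mono slice_snd),
          lintegral_const, measure_univ, mul_one]

theorem unique [MeasurableMul₂ G] [MeasurableInv G]
    (hν : IsHaarProbabilityOn S ν) (hρ : IsHaarProbabilityOn S ρ) : ν = ρ :=
  Measure.ext fun _ hB =>
    (hν.measure_preimage_inv hν hB).symm.trans (hν.measure_preimage_inv hρ hB)

theorem map_conj [MeasurableMul G] (h : IsHaarProbabilityOn S ν) (g : G) :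
    IsHaarProbabilityOn (S.map (MulAut.conj g).toMonoidHom) (ν.map fun x => g * x * g⁻¹) := by
  let c : G ≃ᵐ G := (MeasurableEquiv.mulLeft g).trans (MeasurableEquiv.mulRight g⁻¹)
  have hmap : ∀ s, ν.map (fun x => g * x * g⁻¹) s = ν ((fun x => g * x * g⁻¹) ⁻¹' s) :=
    c.map_apply
  have := h.isProbabilityMeasure
  refine ⟨Measure.isProbabilityMeasure_map c.measurable.aemeasurable, ?_, ?_⟩
  · rw [hmap, ← h.measure_compl]
    congr 1; ext x; simp
  · rintro _ ⟨k, hk, rfl⟩ A hA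
    have hcA : MeasurableSet ((fun x => g * x * g⁻¹) ⁻¹' A) := c.measurable hA
    rw [hmap, hmap, ← h.measure_preimage_mul_left k hk _ hcA]
    congr 1; ext x; simp [mul_assoc]

theorem measure_preimage_conj [MeasurableMul₂ G] [MeasurableInv G] {g : G}
    (hν : IsHaarProbabilityOn S ν)
    (hρ : IsHaarProbabilityOn (S.map (MulAut.conj g).toMonoidHom) ρ) {A : Set G}
    (hA : MeasurableSet A) : ν ((fun x => g * x * g⁻¹) ⁻¹' A) = ρ A := by
  rw [← Measure.map_apply (by fun_prop) hA, (hν.map_conj g).unique hρ]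

theorem measure_pos_of_isOpen [TopologicalSpace G] [ContinuousMul G] [OpensMeasurableSpace G]
    (h : IsHaarProbabilityOn S ν) (hS : IsCompact (S : Set G)) {U : Set G} (hU : IsOpen U)
    (hSU : ((S : Set G) ∩ U).Nonempty) : 0 < ν U := by
  obtain ⟨u, huS, huU⟩ := hSU
  have hcover : (S : Set G) ⊆ ⋃ k : S, (fun x => (k : G)⁻¹ * x) ⁻¹' U := fun y hy =>
    mem_iUnion.2 ⟨⟨y * u⁻¹, mul_mem hy (inv_mem huS)⟩, by simpa [mul_assoc] using huU⟩
  obtain ⟨t, ht⟩ :=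
    hS.elim_finite_subcover _ (fun k => hU.preimage (continuous_const_mul _)) hcover
  have htranslate : ∀ k : S, ν ((fun x => (k : G)⁻¹ * x) ⁻¹' U) = ν U := fun k =>
    h.measure_preimage_mul_left _ (inv_mem k.2) U hU.measurableSet
  have hle : 1 ≤ t.card * ν U :=
    calc 1 = ν S := h.measure_subgroup.symm
      _ ≤ ∑ k ∈ t, ν ((fun x => (k : G)⁻¹ * x) ⁻¹' U) :=
        (measure_mono ht).trans (measure_biUnion_finset_le t _)
      _ = t.card * ν U := by simp [htranslate]
  exact pos_iff_ne_zero.2 fun h0 => by simp [h0] at hle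

end IsHaarProbabilityOn

end HaarProbability

section Chabauty

variable {G : Type*} [Group G] [TopologicalSpace G]

instance : BorelSpace (Chab G) := ⟨rfl⟩

theorem isOpen_setOf_inter_nonempty {V : Set G} (hV : IsOpen V) :
    IsOpen {H : Chab G | ((H.1 : Set G) ∩ V).Nonempty} :=
  TopologicalSpace.isOpen_generateFrom_of_mem (Or.inl ⟨V, hV, rfl⟩)

theorem isOpen_setOf_inter_eq_empty {K : Set G} (hK : IsCompact K) :
    IsOpen {H : Chab G | (H.1 : Set G) ∩ K = ∅} :=
  TopologicalSpace.isOpen_generateFrom_of_mem (Or.inr ⟨K, hK, rfl⟩)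

/-- A closed subgroup is compact iff it lies in the closure of some member of a compact
exhaustion, and `{H | H ⊆ F}` is Chabauty-closed for closed `F`. -/
theorem measurableSet_setOf_isCompact [R1Space G] [WeaklyLocallyCompactSpace G]
    [SigmaCompactSpace G] : MeasurableSet {H : Chab G | IsCompact (H.1 : Set G)} := by
  let K := CompactExhaustion.choice G
  have hunion : {H : Chab G | IsCompact (H.1 : Set G)}
      = ⋃ n, {H : Chab G | ((H.1 : Set G) ∩ (closure (K n))ᶜ).Nonempty}ᶜ := by
    ext H
    simp only [mem_ofPred_eq, mem_iUnion, mem_compl_iff, inter_compl_nonempty_iff, not_not]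
    constructor
    · intro hH
      obtain ⟨n, hn⟩ := K.exists_superset_of_isCompact hH
      exact ⟨n, hn.trans subset_closure⟩
    · rintro ⟨n, hn⟩
      exact (K.isCompact n).closure.of_isClosed_subset H.2 hn
  rw [hunion]
  exact .iUnion fun n =>
    (isOpen_setOf_inter_nonempty isClosed_closure.isOpen_compl).measurableSet.compl

variable [IsTopologicalGroup G]

theorem coe_conjChab (g : G) (H : Chab G) :
    ((conjChab g H).1 : Set G) = (fun x => g * x * g⁻¹) '' H.1 :=
  Subgroup.coe_map _ _

theorem continuous_conjChab (g : G) : Continuous (conjChab g : Chab G → Chab G) := by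
  let c : G ≃ₜ G := (Homeomorph.mulLeft g).trans (Homeomorph.mulRight g⁻¹)
  refine continuous_generateFrom_iff.2 ?_
  rintro s (⟨V, hV, rfl⟩ | ⟨K, hK, rfl⟩)
  · simp only [preimage_ofPred_eq, coe_conjChab, image_inter_nonempty_iff]
    exact isOpen_setOf_inter_nonempty (hV.preimage c.continuous)
  · simp only [preimage_ofPred_eq, coe_conjChab, ← not_nonempty_iff_eq_empty,
      image_inter_nonempty_iff]
    have hK' : IsCompact ((fun x => g * x * g⁻¹) ⁻¹' K) := c.isCompact_preimage.2 hK
    simpa only [← not_nonempty_iff_eq_empty] using isOpen_setOf_inter_eq_empty hK'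

end Chabauty

section AveragedHaar

variable {G : Type*} [Group G] [TopologicalSpace G] [MeasurableSpace G]
  {μ : Measure (Chab G)} {m : Chab G → Measure G}

noncomputable def averagedHaar (μ : Measure (Chab G)) (m : Chab G → Measure G) : Measure G :=
  μ.bind fun H => (m H).restrict H.1

theorem measurable_restrict_self
    (hm_meas : ∀ A : Set G, MeasurableSet A →
      Measurable fun H : Chab G => m H ((H.1 : Set G) ∩ A)) :
    Measurable fun H : Chab G => (m H).restrict H.1 :=
  Measure.measurable_of_measurable_coe _ fun A hA => by
    simpa only [Measure.restrict_apply hA, inter_comm] using hm_meas A hA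

theorem averagedHaar_apply
    (hm_meas : ∀ A : Set G, MeasurableSet A →
      Measurable fun H : Chab G => m H ((H.1 : Set G) ∩ A))
    {A : Set G} (hA : MeasurableSet A) :
    averagedHaar μ m A = ∫⁻ H, m H ((H.1 : Set G) ∩ A) ∂μ := by
  simp only [averagedHaar, Measure.bind_apply hA (measurable_restrict_self hm_meas).aemeasurable,
    Measure.restrict_apply hA, inter_comm]

theorem isProbabilityMeasure_averagedHaar [IsProbabilityMeasure μ]
    (hm_meas : ∀ A : Set G, MeasurableSet A →
      Measurable fun H : Chab G => m H ((H.1 : Set G) ∩ A))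
    (hm : ∀ᵐ H ∂μ, IsHaarProbabilityOn H.1 (m H)) :
    IsProbabilityMeasure (averagedHaar μ m) := by
  refine isProbabilityMeasure_bind (measurable_restrict_self hm_meas).aemeasurable ?_
  filter_upwards [hm] with H hH
  exact ⟨by rw [Measure.restrict_apply_univ, hH.measure_subgroup]⟩

theorem averagedHaar_preimage_conj [IsTopologicalGroup G] [MeasurableMul₂ G] [MeasurableInv G]
    (hm_meas : ∀ A : Set G, MeasurableSet A →
      Measurable fun H : Chab G => m H ((H.1 : Set G) ∩ A))
    (hm : ∀ H : Chab G, IsCompact (H.1 : Set G) → IsHaarProbabilityOn H.1 (m H))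
    (hcpt : ∀ᵐ H ∂μ, IsCompact (H.1 : Set G)) (g : G) (hμ : μ.map (conjChab g) = μ)
    {A : Set G} (hA : MeasurableSet A) :
    averagedHaar μ m ((fun x => g * x * g⁻¹) ⁻¹' A) = averagedHaar μ m A := by
  rw [averagedHaar_apply hm_meas (hA.preimage (by fun_prop)), averagedHaar_apply hm_meas hA]
  conv_rhs => rw [← hμ, lintegral_map (hm_meas A hA) (continuous_conjChab g).measurable]
  refine lintegral_congr_ae ?_
  filter_upwards [hcpt] with H hH
  have hgH : IsCompact ((conjChab g H).1 : Set G) := coe_conjChab g H ▸ hH.image (by fun_prop)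
  rw [(hm _ hgH).measure_subgroup_inter, (hm H hH).measure_subgroup_inter,
    (hm H hH).measure_preimage_conj (hm _ hgH) hA]

theorem iUnion_msupport_subset_msupport_averagedHaar [ContinuousMul G] [OpensMeasurableSpace G]
    (hm_meas : ∀ A : Set G, MeasurableSet A →
      Measurable fun H : Chab G => m H ((H.1 : Set G) ∩ A))
    (hm : ∀ᵐ H ∂μ, IsCompact (H.1 : Set G) ∧ IsHaarProbabilityOn H.1 (m H)) :
    ⋃ H ∈ msupport μ, (H.1 : Set G) ⊆ msupport (averagedHaar μ m) := by
  intro x hx U hU hxU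
  obtain ⟨H₀, hH₀, hxH₀⟩ := mem_iUnion₂.1 hx
  rw [averagedHaar_apply hm_meas hU.measurableSet,
    lintegral_pos_iff_support (hm_meas U hU.measurableSet)]
  refine (hH₀ _ (isOpen_setOf_inter_nonempty hU) ⟨x, hxH₀, hxU⟩).trans_le (measure_mono_ae ?_)
  filter_upwards [hm] with H ⟨hH, hHaar⟩ hHU
  exact (hHaar.measure_subgroup_inter U ▸ hHaar.measure_pos_of_isOpen hH hU hHU).ne'

end AveragedHaar

/-- if `μ` is a compact IRS of a locally compact second countable
group `G`, and `H ↦ m H` assigns (measurably) to each compact subgroup its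
normalized Haar probability measure viewed on `G`, then
`ν(A) = ∫ m_H (A ∩ H) dμ(H)` defines a conjugation-invariant Borel probability
measure on `G`, and `⋃ supp μ ⊆ supp ν`. -/
theorem averaged_haar_measure_of_compact_irs
    (G : Type*) [Group G] [TopologicalSpace G] [IsTopologicalGroup G]
    [LocallyCompactSpace G] [SecondCountableTopology G]
    [MeasurableSpace G] [BorelSpace G]
    (μ : Measure (Chab G)) [IsProbabilityMeasure μ]
    (hinv : ∀ g : G, ∀ A : Set (Chab G), MeasurableSet A →
      μ (conjChab g ⁻¹' A) = μ A)
    (hcompact : μ {H : Chab G | IsCompact ((H.1 : Subgroup G) : Set G)} = 1)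
    (m : Chab G → Measure G)
    (hm_prob : ∀ H : Chab G, IsCompact ((H.1 : Subgroup G) : Set G) →
      IsProbabilityMeasure (m H))
    (hm_supp : ∀ H : Chab G, IsCompact ((H.1 : Subgroup G) : Set G) →
      m H (((H.1 : Subgroup G) : Set G)ᶜ) = 0)
    (hm_haar : ∀ H : Chab G, IsCompact ((H.1 : Subgroup G) : Set G) →
      ∀ h ∈ (H.1 : Subgroup G), ∀ A : Set G, MeasurableSet A →
        m H ((fun x => h * x) ⁻¹' A) = m H A)
    (hm_meas : ∀ A : Set G, MeasurableSet A →
      Measurable (fun H : Chab G => m H (((H.1 : Subgroup G) : Set G) ∩ A))) :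
    ∃ ν : Measure G, IsProbabilityMeasure ν ∧
      (∀ A : Set G, MeasurableSet A →
        ν A = ∫⁻ H, m H (((H.1 : Subgroup G) : Set G) ∩ A) ∂μ) ∧
      (∀ g : G, ∀ A : Set G, MeasurableSet A →
        ν ((fun x => g * x * g⁻¹) ⁻¹' A) = ν A) ∧
      (⋃ H ∈ msupport μ, ((H.1 : Subgroup G) : Set G)) ⊆ msupport ν := by
  have hcpt : ∀ᵐ H ∂μ, IsCompact ((H.1 : Subgroup G) : Set G) :=
    mem_ae_iff.2 ((prob_compl_eq_zero_iff measurableSet_setOf_isCompact).2 hcompact)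
  have hm : ∀ H : Chab G, IsCompact ((H.1 : Subgroup G) : Set G) →
      IsHaarProbabilityOn H.1 (m H) := fun H hH => ⟨hm_prob H hH, hm_supp H hH, hm_haar H hH⟩
  have hμ : ∀ g : G, μ.map (conjChab g) = μ := fun g => Measure.ext fun s hs => by
    rw [Measure.map_apply (continuous_conjChab g).measurable hs, hinv g s hs]
  refine ⟨averagedHaar μ m, ?_, fun A hA => averagedHaar_apply hm_meas hA,
    fun g A hA => averagedHaar_preimage_conj hm_meas hm hcpt g (hμ g) hA, ?_⟩
  · exact isProbabilityMeasure_averagedHaar hm_meas (hcpt.mono hm)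
  · exact iUnion_msupport_subset_msupport_averagedHaar hm_meas
      (hcpt.mono fun H hH => ⟨hH, hm H hH⟩)
end

section
/- Let G = ⋃ₙ Oₙ be a locally compact second countable group written as an ascending union of open subgroups, and let μ be a compact IRS of G with μ(Sub(O₀)) > 0. Suppose for every n with μ(Sub(Oₙ)) > 0, the conditional IRS μₙ(A) := μ(A)/μ(Sub(Oₙ)) on Sub(Oₙ) satisfies μₙ(Sub(E(Oₙ))) = 1. Then μ(Sub(E(G))) = 1, where E denotes the locally elliptic radical. -/
/-!
The subgroup `liminf E(Oₙ) = ⋃ₖ ⋂_{n ≥ k} E(Oₙ)` is normal and locally elliptic in `G`, hence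
contained in `E(G)`; the key point is that `E(Oₙ) ∩ Oₘ ≤ E(Oₘ)` for `m ≤ n`, because `Oₘ` is
closed. A compact subgroup lies in some `Oₘ`, and since `Sub(Oₙ) \ Sub(E(Oₙ))` is `μ`-null for
every `n`, almost every compact subgroup in `Sub(Oₘ)` lies in `E(Oₙ)` for all `n ≥ m`, hence in
the liminf.
-/

open MeasureTheory

/-- A subgroup is locally elliptic if each of its compact subsets is contained in a
compact subgroup of it. -/
def IsLocallyElliptic {G : Type*} [Group G] [TopologicalSpace G] (H : Subgroup G) : Prop :=
  ∀ K : Set G, K ⊆ (H : Set G) → IsCompact K →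
    ∃ C : Subgroup G, C ≤ H ∧ IsCompact ((C : Subgroup G) : Set G) ∧ K ⊆ (C : Set G)

/-- `E` is the locally elliptic radical of the subgroup `O`. -/
def IsLocallyEllipticRadicalOf {G : Type*} [Group G] [TopologicalSpace G]
    (E O : Subgroup G) : Prop :=
  E ≤ O ∧ IsClosed ((E : Subgroup G) : Set G) ∧
    (∀ g ∈ O, ∀ x ∈ E, g * x * g⁻¹ ∈ E) ∧ IsLocallyElliptic E ∧
    ∀ N : Subgroup G, N ≤ O → (∀ g ∈ O, ∀ x ∈ N, g * x * g⁻¹ ∈ N) →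
      IsLocallyElliptic N → N ≤ E

open Filter

section LocallyElliptic

variable {G : Type*} [Group G] [TopologicalSpace G]

lemma IsLocallyElliptic.inf_of_isClosed {E N : Subgroup G} (hE : IsLocallyElliptic E)
    (hN : IsClosed (N : Set G)) : IsLocallyElliptic (E ⊓ N) := by
  intro K hK hKc
  have hKN : K ⊆ N := fun x hx => (Subgroup.mem_inf.1 (hK hx)).2
  obtain ⟨C, hCE, hCc, hKC⟩ := hE K (fun x hx => (Subgroup.mem_inf.1 (hK hx)).1) hKc
  refine ⟨C ⊓ N, inf_le_inf_right N hCE, ?_, ?_⟩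
  · rw [Subgroup.coe_inf]
    exact hCc.inter_right hN
  · rw [Subgroup.coe_inf]
    exact Set.subset_inter hKC hKN

lemma IsLocallyEllipticRadicalOf.inf_le {E E' O O' : Subgroup G}
    (hE : IsLocallyEllipticRadicalOf E O) (hE' : IsLocallyEllipticRadicalOf E' O')
    (hOO' : O ≤ O') (hO : IsClosed (O : Set G)) : E' ⊓ O ≤ E := by
  refine hE.2.2.2.2 (E' ⊓ O) inf_le_right (fun g hg x hx => ?_) (hE'.2.2.2.1.inf_of_isClosed hO)
  rw [Subgroup.mem_inf] at hx ⊢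
  exact ⟨hE'.2.2.1 g (hOO' hg) x hx.1, mul_mem (mul_mem hg hx.2) (inv_mem hg)⟩

end LocallyElliptic

lemma Subgroup.mem_liminf_atTop_iff {G : Type*} [Group G] {E : ℕ → Subgroup G} {x : G} :
    x ∈ liminf E atTop ↔ ∀ᶠ n in atTop, x ∈ E n := by
  have hmono : Monotone fun m => ⨅ n ≥ m, E n := fun a b hab =>
    iInf_mono fun n => iInf_mono' fun hbn => ⟨hab.trans hbn, le_rfl⟩
  rw [liminf_eq_iSup_iInf_of_nat, Subgroup.mem_iSup_of_directed hmono.directed_le,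
    eventually_atTop]
  simp only [Subgroup.mem_iInf]

lemma Monotone.exists_subset_of_isCompact {X : Type*} [TopologicalSpace X] {U : ℕ → Set X}
    (hU : Monotone U) (hUo : ∀ n, IsOpen (U n)) (hUcover : ∀ x, ∃ n, x ∈ U n)
    {K : Set X} (hK : IsCompact K) : ∃ n, K ⊆ U n :=
  hK.elim_directed_cover U hUo (fun x _ => Set.mem_iUnion.2 (hUcover x)) hU.directed_le

section AscendingUnion

variable {G : Type*} [Group G] [TopologicalSpace G] {O E : ℕ → Subgroup G}

lemma conj_mem_liminf_radical (hmono : Monotone O) (hunion : ∀ g : G, ∃ n, g ∈ O n)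
    (hE : ∀ n, IsLocallyEllipticRadicalOf (E n) (O n)) (g : G) {x : G}
    (hx : x ∈ liminf E atTop) : g * x * g⁻¹ ∈ liminf E atTop := by
  obtain ⟨j, hj⟩ := hunion g
  rw [Subgroup.mem_liminf_atTop_iff] at hx ⊢
  filter_upwards [hx, eventually_ge_atTop j] with n hxn hjn
  exact (hE n).2.2.1 g (hmono hjn hj) x hxn

lemma mem_radical_of_mem_liminf (hclosed : ∀ n, IsClosed (O n : Set G)) (hmono : Monotone O)
    (hE : ∀ n, IsLocallyEllipticRadicalOf (E n) (O n)) {k n : ℕ} (hkn : k ≤ n) {x : G}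
    (hx : x ∈ liminf E atTop) (hxk : x ∈ O k) : x ∈ E n := by
  obtain ⟨j, hj⟩ := eventually_atTop.1 (Subgroup.mem_liminf_atTop_iff.1 hx)
  rcases le_total j n with hjn | hnj
  · exact hj n hjn
  · exact (hE n).inf_le (hE j) (hmono hnj) (hclosed n) ⟨hj j le_rfl, hmono hkn hxk⟩

variable [SeparatelyContinuousMul G]

lemma isLocallyElliptic_liminf_radical (hopen : ∀ n, IsOpen (O n : Set G)) (hmono : Monotone O)
    (hunion : ∀ g : G, ∃ n, g ∈ O n) (hE : ∀ n, IsLocallyEllipticRadicalOf (E n) (O n)) :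
    IsLocallyElliptic (liminf E atTop) := by
  intro K hK hKc
  have hclosed n := (O n).isClosed_of_isOpen (hopen n)
  obtain ⟨k, hKk⟩ := hmono.exists_subset_of_isCompact hopen hunion hKc
  set N := ⨅ n ≥ k, E n
  have hN : IsClosed (N : Set G) := by
    simp only [N, Subgroup.coe_iInf]
    exact isClosed_biInter fun n _ => (hE n).2.1
  have hKN : K ⊆ E k ⊓ N := fun x hx => Subgroup.mem_inf.2
    ⟨mem_radical_of_mem_liminf hclosed hmono hE le_rfl (hK hx) (hKk hx),
      Subgroup.mem_iInf.2 fun n => Subgroup.mem_iInf.2 fun hkn =>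
        mem_radical_of_mem_liminf hclosed hmono hE hkn (hK hx) (hKk hx)⟩
  obtain ⟨C, hCN, hCc, hKC⟩ := (hE k).2.2.2.1.inf_of_isClosed hN K hKN hKc
  have hNle : N ≤ liminf E atTop :=
    le_liminf_of_le (h := (eventually_ge_atTop k).mono fun n hkn => biInf_le E hkn)
  exact ⟨C, hCN.trans (inf_le_right.trans hNle), hCc, hKC⟩

lemma liminf_radical_le_radical (hopen : ∀ n, IsOpen (O n : Set G)) (hmono : Monotone O)
    (hunion : ∀ g : G, ∃ n, g ∈ O n) (hE : ∀ n, IsLocallyEllipticRadicalOf (E n) (O n))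
    {EG : Subgroup G} (hEG : IsLocallyEllipticRadicalOf EG ⊤) : liminf E atTop ≤ EG :=
  hEG.2.2.2.2 _ le_top (fun g _ _ hx => conj_mem_liminf_radical hmono hunion hE g hx)
    (isLocallyElliptic_liminf_radical hopen hmono hunion hE)

end AscendingUnion

lemma MeasureTheory.measure_iUnion_le_liminf {α : Type*} [MeasurableSpace α] {μ : Measure α}
    [IsFiniteMeasure μ] {S A : ℕ → Set α} (hS : Monotone S) (hAS : ∀ n, A n ⊆ S n)
    (hA : ∀ n, MeasurableSet (A n)) (hμ : ∀ n, μ (A n) = μ (S n)) :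
    μ (⋃ n, S n) ≤ μ (liminf A atTop) := by
  have hae : ∀ᵐ x ∂μ, ∀ n, x ∈ S n → x ∈ A n := ae_all_iff.2 fun n =>
    (ae_eq_of_subset_of_measure_ge (hAS n) (hμ n).ge (hA n).nullMeasurableSet
      (measure_ne_top μ _)).mono fun x hx hxS => hx.mpr hxS
  refine measure_mono_ae (hae.mono fun x hx hxS => ?_)
  obtain ⟨m, hm⟩ := Set.mem_iUnion.1 hxS
  exact mem_liminf_iff_eventually_mem.2
    ((eventually_ge_atTop m).mono fun n hmn => hx n (hS hmn hm))

instance Chab.borelSpace (G : Type*) [Group G] [TopologicalSpace G] : BorelSpace (Chab G) :=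
  ⟨rfl⟩

lemma Chab.isClosed_setOf_le {G : Type*} [Group G] [TopologicalSpace G] {K : Subgroup G}
    (hK : IsClosed (K : Set G)) : IsClosed {H : Chab G | H.1 ≤ K} := by
  have hcompl :
      {H : Chab G | H.1 ≤ K}ᶜ = {H : Chab G | ((H.1 : Set G) ∩ (K : Set G)ᶜ).Nonempty} := by
    ext H
    simp only [Set.mem_compl_iff, Set.mem_ofPred_eq, Set.inter_compl_nonempty_iff]
    rfl
  rw [← isOpen_compl_iff, hcompl]
  exact TopologicalSpace.isOpen_generateFrom_of_mem (Or.inl ⟨_, hK.isOpen_compl, rfl⟩)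

theorem compact_irs_in_locally_elliptic_radical_of_ascending_union_general
    (G : Type*) [Group G] [TopologicalSpace G] [IsTopologicalGroup G]
    (O : ℕ → Subgroup G) (hopen : ∀ n, IsOpen ((O n : Subgroup G) : Set G))
    (hmono : Monotone O) (hunion : ∀ g : G, ∃ n, g ∈ O n)
    (E : ℕ → Subgroup G) (hE : ∀ n, IsLocallyEllipticRadicalOf (E n) (O n))
    (EG : Subgroup G) (hEG : IsLocallyEllipticRadicalOf EG ⊤)
    (μ : Measure (Chab G)) [IsProbabilityMeasure μ]
    (hcompact : μ {H : Chab G | IsCompact ((H.1 : Subgroup G) : Set G)} = 1)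
    (h0 : 0 < μ {H : Chab G | (H.1 : Subgroup G) ≤ O 0})
    (hcond : ∀ n : ℕ, 0 < μ {H : Chab G | (H.1 : Subgroup G) ≤ O n} →
      μ {H : Chab G | (H.1 : Subgroup G) ≤ E n} =
        μ {H : Chab G | (H.1 : Subgroup G) ≤ O n}) :
    μ {H : Chab G | (H.1 : Subgroup G) ≤ EG} = 1 := by
  have hpos n : 0 < μ {H : Chab G | H.1 ≤ O n} :=
    h0.trans_le (measure_mono fun H hH => hH.trans (hmono n.zero_le))
  have hcover : {H : Chab G | IsCompact (H.1 : Set G)} ⊆ ⋃ n, {H : Chab G | H.1 ≤ O n} :=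
    fun H hH => Set.mem_iUnion.2 (hmono.exists_subset_of_isCompact hopen hunion hH)
  refine le_antisymm prob_le_one ?_
  calc 1 = μ {H : Chab G | IsCompact (H.1 : Set G)} := hcompact.symm
    _ ≤ μ (⋃ n, {H : Chab G | H.1 ≤ O n}) := measure_mono hcover
    _ ≤ μ (liminf (fun n => {H : Chab G | H.1 ≤ E n}) atTop) :=
      measure_iUnion_le_liminf (fun _ _ hmn _ hH => hH.trans (hmono hmn))
        (fun n _ hH => hH.trans (hE n).1)
        (fun n => (Chab.isClosed_setOf_le (hE n).2.1).measurableSet) (fun n => hcond n (hpos n))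
    _ ≤ μ {H : Chab G | H.1 ≤ EG} := measure_mono fun H hH =>
      (le_liminf_of_le (u := E) (h := mem_liminf_iff_eventually_mem.1 hH)).trans
        (liminf_radical_le_radical hopen hmono hunion hE hEG)

/-- let `G = ⋃ₙ Oₙ` be an ascending union of open subgroups and `μ` a
compact IRS of `G` with `μ(Sub O₀) > 0`.  If for every `n` with `μ(Sub Oₙ) > 0` the
conditional IRS `μₙ = μ(· )/μ(Sub Oₙ)` gives full measure to `Sub (E(Oₙ))`
(equivalently `μ(Sub (E(Oₙ))) = μ(Sub Oₙ)`), then `μ(Sub (E(G))) = 1`. -/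
theorem compact_irs_in_locally_elliptic_radical_of_ascending_union
    (G : Type*) [Group G] [TopologicalSpace G] [IsTopologicalGroup G]
    [LocallyCompactSpace G] [SecondCountableTopology G]
    (O : ℕ → Subgroup G) (hopen : ∀ n, IsOpen ((O n : Subgroup G) : Set G))
    (hmono : Monotone O) (hunion : ∀ g : G, ∃ n, g ∈ O n)
    (E : ℕ → Subgroup G) (hE : ∀ n, IsLocallyEllipticRadicalOf (E n) (O n))
    (EG : Subgroup G) (hEG : IsLocallyEllipticRadicalOf EG ⊤)
    (μ : Measure (Chab G)) [IsProbabilityMeasure μ]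
    (hinv : ∀ g : G, ∀ A : Set (Chab G), MeasurableSet A →
      μ (conjChab g ⁻¹' A) = μ A)
    (hcompact : μ {H : Chab G | IsCompact ((H.1 : Subgroup G) : Set G)} = 1)
    (h0 : 0 < μ {H : Chab G | (H.1 : Subgroup G) ≤ O 0})
    (hcond : ∀ n : ℕ, 0 < μ {H : Chab G | (H.1 : Subgroup G) ≤ O n} →
      μ {H : Chab G | (H.1 : Subgroup G) ≤ E n} =
        μ {H : Chab G | (H.1 : Subgroup G) ≤ O n}) :
    μ {H : Chab G | (H.1 : Subgroup G) ≤ EG} = 1 :=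
  compact_irs_in_locally_elliptic_radical_of_ascending_union_general G O hopen hmono hunion E hE EG
    hEG μ hcompact h0 hcond
end
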